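/- arXiv:2211.01841 — 8 statements merged into one kernel-verified Lean document; each statement's English description precedes it below -/
import Mathlib

section
/- For any effect signature E and any type X, the map ĉ : D → S̄_E(X) is a well-defined order isomorphism: every value of ĉ is a costrategy, ĉ is bijective, and for all d, d' ∈ D one has d ≤ d' if and only if ĉ d ⊆ ĉ d'. -/
universe u v w

/-- Coplays over an effect signature `(E, ar)` with results in `X`. -/
inductive Coplay (E : Type u) (ar : E → Type v) (X : Type w) : Type (max u v w)
  | ret : X → Coplay E ar X
  | op : E → Coplay E ar X
  | cons : (m : E) → ar m → Coplay E ar X → Coplay E ar X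

/-- The prefix relation `⊑` on coplays. -/
inductive Coplay.Prefix {E : Type u} {ar : E → Type v} {X : Type w} :
    Coplay E ar X → Coplay E ar X → Prop
  | ret (x : X) : Coplay.Prefix (.ret x) (.ret x)
  | op (m : E) : Coplay.Prefix (.op m) (.op m)
  | op_cons (m : E) (n : ar m) (t : Coplay E ar X) :
      Coplay.Prefix (.op m) (.cons m n t)
  | cons (m : E) (n : ar m) {s t : Coplay E ar X} :
      Coplay.Prefix s t → Coplay.Prefix (.cons m n s) (.cons m n t)

/-- The coherence relation `☡` on coplays. -/
inductive Coplay.Coh {E : Type u} {ar : E → Type v} {X : Type w} :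
    Coplay E ar X → Coplay E ar X → Prop
  | ret (x : X) : Coplay.Coh (.ret x) (.ret x)
  | op (m : E) : Coplay.Coh (.op m) (.op m)
  | op_cons (m : E) (n : ar m) (s : Coplay E ar X) :
      Coplay.Coh (.op m) (.cons m n s)
  | cons (m : E) (n₁ n₂ : ar m) (s₁ s₂ : Coplay E ar X) :
      (n₁ = n₂ → Coplay.Coh s₁ s₂) → Coplay.Coh (.cons m n₁ s₁) (.cons m n₂ s₂)

/-- A costrategy: a set of coplays, downward closed under the prefix relation
and pairwise coherent. -/
def IsCostrategy {E : Type u} {ar : E → Type v} {X : Type w}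
    (σ : Set (Coplay E ar X)) : Prop :=
  (∀ s t : Coplay E ar X, Coplay.Prefix s t → t ∈ σ → s ∈ σ) ∧
  (∀ s ∈ σ, ∀ t ∈ σ, Coplay.Coh s t ∨ Coplay.Coh t s)

/-- The domain `D = Option ((Σ m : E, (ar m → S̄_E(X))) ⊕ X)`. -/
def DType (E : Type u) (ar : E → Type v) (X : Type w) :=
  Option ((Σ m : E, (ar m → {σ : Set (Coplay E ar X) // IsCostrategy σ})) ⊕ X)

/-- The order on `D`. -/
inductive DLE {E : Type u} {ar : E → Type v} {X : Type w} :
    DType E ar X → DType E ar X → Prop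
  | bot (d : DType E ar X) : DLE none d
  | inl (m : E) (f f' : ar m → {σ : Set (Coplay E ar X) // IsCostrategy σ}) :
      (∀ n, (f n).1 ⊆ (f' n).1) → DLE (some (Sum.inl ⟨m, f⟩)) (some (Sum.inl ⟨m, f'⟩))
  | inr (x : X) : DLE (some (Sum.inr x)) (some (Sum.inr x))

/-- The map `ĉ : D → Set (Coplay E ar X)`. -/
def chat {E : Type u} {ar : E → Type v} {X : Type w} :
    DType E ar X → Set (Coplay E ar X)
  | none => ∅
  | some (Sum.inl ⟨m, f⟩) =>
      {Coplay.op m} ∪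
        {s | ∃ (n : ar m) (u : Coplay E ar X), u ∈ (f n).1 ∧ s = Coplay.cons m n u}
  | some (Sum.inr x) => {Coplay.ret x}

/-!
A nonempty costrategy is determined by its shortest plays: by coherence it contains either a
single `ret x`, or a unique `op m`, in which case every other play has the form `m·n·s` and the
plays `s` following each answer `n` form a costrategy again. This gives the inverse of `ĉ`, and
the order on `D` is the inclusion order of these components.
-/

variable {E : Type u} {ar : E → Type v} {X : Type w}

namespace Coplay.Coh

lemma eq_of_ret_left {x : X} {t : Coplay E ar X} (h : Coh (.ret x) t) : t = .ret x := by
  cases h; rfl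

lemma eq_of_ret_right {x : X} {t : Coplay E ar X} (h : Coh t (.ret x)) : t = .ret x := by
  cases h; rfl

lemma eq_of_op_right {m : E} {t : Coplay E ar X} (h : Coh t (.op m)) : t = .op m := by
  cases h; rfl

lemma eq_op_or_cons_of_op_left {m : E} {t : Coplay E ar X} (h : Coh (.op m) t) :
    t = .op m ∨ ∃ n s, t = .cons m n s := by
  cases h with
  | op => exact .inl rfl
  | op_cons _ n s => exact .inr ⟨n, s, rfl⟩

end Coplay.Coh

lemma mem_chat_inl {m : E} {f : ar m → {σ : Set (Coplay E ar X) // IsCostrategy σ}}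
    {s : Coplay E ar X} :
    s ∈ chat (some (Sum.inl ⟨m, f⟩)) ↔ s = .op m ∨ ∃ n, ∃ u ∈ (f n).1, s = .cons m n u :=
  Iff.rfl

lemma cons_mem_chat_inl {m : E} {f : ar m → {σ : Set (Coplay E ar X) // IsCostrategy σ}}
    {n : ar m} {u : Coplay E ar X} :
    Coplay.cons m n u ∈ chat (some (Sum.inl ⟨m, f⟩)) ↔ u ∈ (f n).1 := by
  simp [mem_chat_inl]

lemma ret_mem_chat {x : X} {d : DType E ar X} :
    Coplay.ret x ∈ chat d ↔ d = some (Sum.inr x) := by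
  refine ⟨fun h => ?_, by rintro rfl; rfl⟩
  rcases d with _ | ⟨⟨m, f⟩⟩ | x'
  · exact h.elim
  · rcases h with h | ⟨n, u, -, h⟩ <;> cases h
  · cases Set.mem_singleton_iff.1 h; rfl

lemma op_mem_chat {m : E} {d : DType E ar X} :
    Coplay.op m ∈ chat d ↔ ∃ f, d = some (Sum.inl ⟨m, f⟩) := by
  refine ⟨fun h => ?_, by rintro ⟨f, rfl⟩; exact .inl rfl⟩
  rcases d with _ | ⟨⟨m', f⟩⟩ | x
  · exact h.elim
  · rcases h with h | ⟨n, u, -, h⟩ <;> cases h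
    exact ⟨f, rfl⟩
  · cases Set.mem_singleton_iff.1 h

lemma isCostrategy_chat (d : DType E ar X) : IsCostrategy (chat d) := by
  rcases d with _ | ⟨⟨m, f⟩⟩ | x
  · exact ⟨fun _ _ _ ht => ht.elim, fun _ hs => hs.elim⟩
  · refine ⟨?_, ?_⟩
    · rintro s t hst (rfl | ⟨n, u, hu, rfl⟩)
      · cases hst; exact .inl rfl
      · cases hst with
        | op_cons => exact .inl rfl
        | cons _ _ hsu => exact .inr ⟨n, _, (f n).2.1 _ _ hsu hu, rfl⟩
    · rintro s (rfl | ⟨n₁, u₁, hu₁, rfl⟩) t (rfl | ⟨n₂, u₂, hu₂, rfl⟩)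
      · exact .inl (.op m)
      · exact .inl (.op_cons m n₂ u₂)
      · exact .inr (.op_cons m n₁ u₁)
      · by_cases hn : n₁ = n₂
        · subst hn
          rcases (f n₁).2.2 u₁ hu₁ u₂ hu₂ with h | h
          · exact .inl (.cons m n₁ n₁ u₁ u₂ fun _ => h)
          · exact .inr (.cons m n₁ n₁ u₂ u₁ fun _ => h)
        · exact .inl (.cons m n₁ n₂ u₁ u₂ fun h => absurd h hn)
  · refine ⟨?_, ?_⟩
    · rintro s t hst rfl
      cases hst; rfl
    · rintro s rfl t rfl
      exact .inl (.ret x)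

lemma DLE.chat_subset {d d' : DType E ar X} (h : DLE d d') : chat d ⊆ chat d' := by
  cases h with
  | bot => exact Set.empty_subset _
  | inl m f f' hf =>
    rintro s (hs | ⟨n, u, hu, rfl⟩)
    · exact .inl hs
    · exact .inr ⟨n, u, hf n hu, rfl⟩
  | inr => exact subset_rfl

lemma DLE.of_chat_subset {d d' : DType E ar X} (h : chat d ⊆ chat d') : DLE d d' := by
  rcases d with _ | ⟨⟨m, f⟩⟩ | x
  · exact .bot d'
  · obtain ⟨f', rfl⟩ := op_mem_chat.1 (h (.inl rfl))
    exact .inl m f f' fun n u hu => cons_mem_chat_inl.1 (h (cons_mem_chat_inl.2 hu))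
  · rw [ret_mem_chat.1 (h rfl)]
    exact .inr x

lemma dle_iff_chat_subset {d d' : DType E ar X} : DLE d d' ↔ chat d ⊆ chat d' :=
  ⟨DLE.chat_subset, DLE.of_chat_subset⟩

lemma DLE.antisymm {d d' : DType E ar X} (h : DLE d d') (h' : DLE d' d) : d = d' := by
  cases h with
  | bot => cases h'; rfl
  | inl m f f' hf =>
    cases h' with
    | inl _ _ _ hf' =>
      obtain rfl : f = f' := funext fun n => Subtype.ext ((hf n).antisymm (hf' n))
      rfl
  | inr => rfl

lemma chat_injective : Function.Injective (chat : DType E ar X → Set (Coplay E ar X)) :=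
  fun _ _ h => (DLE.of_chat_subset h.subset).antisymm (DLE.of_chat_subset h.symm.subset)

def Coplay.residual (σ : Set (Coplay E ar X)) (m : E) (n : ar m) : Set (Coplay E ar X) :=
  {u | Coplay.cons m n u ∈ σ}

namespace IsCostrategy

variable {σ : Set (Coplay E ar X)}

lemma residual (hσ : IsCostrategy σ) (m : E) (n : ar m) :
    IsCostrategy (Coplay.residual σ m n) := by
  refine ⟨fun u u' huu' hu' => hσ.1 _ _ (.cons m n huu') hu', fun u hu u' hu' => ?_⟩
  rcases hσ.2 _ hu _ hu' with hc | hc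
  · cases hc with
    | cons _ _ _ _ _ hk => exact .inl (hk rfl)
  · cases hc with
    | cons _ _ _ _ _ hk => exact .inr (hk rfl)

lemma eq_chat_of_ret_mem (hσ : IsCostrategy σ) {x : X} (hx : Coplay.ret x ∈ σ) :
    σ = chat (some (Sum.inr x)) := by
  refine Set.Subset.antisymm (fun t ht => ?_) (by rintro t rfl; exact hx)
  rcases hσ.2 _ ht _ hx with hc | hc
  · exact hc.eq_of_ret_right
  · exact hc.eq_of_ret_left

lemma eq_chat_of_op_mem (hσ : IsCostrategy σ) {m : E} (hm : Coplay.op m ∈ σ) :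
    σ = chat (some (Sum.inl ⟨m, fun n => ⟨Coplay.residual σ m n, hσ.residual m n⟩⟩)) := by
  refine Set.Subset.antisymm (fun t ht => ?_) ?_
  · have ht' : t = .op m ∨ ∃ n s, t = .cons m n s := by
      rcases hσ.2 _ ht _ hm with hc | hc
      · exact .inl hc.eq_of_op_right
      · exact hc.eq_op_or_cons_of_op_left
    rcases ht' with rfl | ⟨n, s, rfl⟩
    · exact .inl rfl
    · exact cons_mem_chat_inl.2 ht
  · rintro t (rfl | ⟨n, u, hu, rfl⟩)
    · exact hm
    · exact hu

lemma exists_chat_eq (hσ : IsCostrategy σ) : ∃ d : DType E ar X, chat d = σ := by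
  rcases σ.eq_empty_or_nonempty with rfl | ⟨s, hs⟩
  · exact ⟨none, rfl⟩
  rcases s with x | m | ⟨m, n, u⟩
  · exact ⟨_, (hσ.eq_chat_of_ret_mem hs).symm⟩
  · exact ⟨_, (hσ.eq_chat_of_op_mem hs).symm⟩
  · exact ⟨_, (hσ.eq_chat_of_op_mem (hσ.1 _ _ (.op_cons m n u) hs)).symm⟩

end IsCostrategy

/-- `ĉ` is a well-defined order isomorphism onto `S̄_E(X)`. -/
theorem chat_orderIso (E : Type u) (ar : E → Type v) (X : Type w) :
    (∀ d : DType E ar X, IsCostrategy (chat d)) ∧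
    (∀ d d' : DType E ar X, chat d = chat d' → d = d') ∧
    (∀ σ : Set (Coplay E ar X), IsCostrategy σ → ∃ d : DType E ar X, chat d = σ) ∧
    (∀ d d' : DType E ar X, DLE d d' ↔ chat d ⊆ chat d') :=
  ⟨isCostrategy_chat, fun _ _ h => chat_injective h, fun _ hσ => hσ.exists_chat_eq,
    fun _ _ => dle_iff_chat_subset⟩
end

section
/- For any effect signature E, any type X, and any m : E, the operation on costrategies induced by ĉ at m preserves directed suprema: for every nonempty family (f_i)_{i ∈ I} of functions ar m → S̄_E(X) that is directed in the pointwise inclusion order, one has ĉ (some (inl ⟨m, fun n => ⋃_{i ∈ I} f_i n⟩)) = ⋃_{i ∈ I} ĉ (some (inl ⟨m, f_i⟩)). -/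
universe u v w

/-- The `inl` clause of the map `ĉ`, on underlying sets:
`ĉ (some (inl ⟨m, f⟩)) = {op m} ∪ {m·n·s | n : ar m, s ∈ f n}`. -/
def chatOp {E : Type u} {ar : E → Type v} {X : Type w}
    (m : E) (f : ar m → Set (Coplay E ar X)) : Set (Coplay E ar X) :=
  {Coplay.op m} ∪
    {s | ∃ (n : ar m) (u : Coplay E ar X), u ∈ f n ∧ s = Coplay.cons m n u}

/-- the operation induced by `ĉ` at `m` preserves directed suprema. -/
theorem chatOp_continuous (E : Type u) (ar : E → Type v) (X : Type w)
    (m : E) (I : Type*) [Nonempty I]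
    (f : I → ar m → Set (Coplay E ar X))
    (hcostrat : ∀ (i : I) (n : ar m), IsCostrategy (f i n))
    (hdir : ∀ i j : I, ∃ k : I, (∀ n, f i n ⊆ f k n) ∧ (∀ n, f j n ⊆ f k n)) :
    chatOp m (fun n => ⋃ i : I, f i n) = ⋃ i : I, chatOp m (f i) := by
  ext s
  simp only [chatOp, Set.mem_union, Set.mem_singleton_iff, Set.mem_setOf_eq, Set.mem_iUnion]
  constructor
  · rintro (rfl | ⟨n, u, hu, rfl⟩)
    · exact ⟨Classical.arbitrary I, Or.inl rfl⟩
    · obtain ⟨i, hi⟩ := hu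
      exact ⟨i, Or.inr ⟨n, u, hi, rfl⟩⟩
  · rintro ⟨i, rfl | ⟨n, u, hu, rfl⟩⟩
    · exact Or.inl rfl
    · exact Or.inr ⟨n, u, ⟨i, hu⟩, rfl⟩
end

section
/- Initiality (Theorem 3.2, algebra part): let E be an effect signature, X a type, A a partial order with least element ⊥ in which every directed subset has a least upper bound, ρ : X → A any function, and for each m : E let α m : (ar m → A) → A be monotone (in the pointwise order) and preserve least upper bounds of directed families. Then there exists a unique function h : S̄_E(X) → A such that: h ∅ = ⊥; h is monotone and preserves least upper bounds of directed families of costrategies (h (⋃D) = sup {h σ | σ ∈ D} for every inclusion-directed nonempty family D of costrategies); h {ret x} = ρ x for all x : X; and h ({op m} ∪ {m·n·s | n : ar m, s ∈ f n}) = α m (fun n => h (f n)) for every m : E and every family f : ar m → S̄_E(X) of costrategies. -/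
universe u v w

/-!
A nonempty costrategy is either `{ret x}` or has a root `op m`, below which hang the subtrees
`cons m n ⁻¹' σ`, `n : ar m`. Unfolding this `k` times and stopping with `⊥` gives approximants
`approx k σ`, monotone in `k` and in `σ`, and `fold σ` is their supremum. Scott continuity of `α m`
turns the suprema over the subtrees into the node equation, and `approx k` commutes with directed
unions by induction on `k`, because the subtrees of a union are the unions of the subtrees.
Conversely, any map with these properties agrees with `approx k σ` on the truncation of `σ` to
coplays of length at most `k`, and `σ` is the directed union of its truncations.
-/

theorem isLUB_range_succ_iff {A : Type*} [PartialOrder A] [OrderBot A] {u : ℕ → A}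
    (h₀ : u 0 = ⊥) {a : A} : IsLUB (Set.range fun k => u (k + 1)) a ↔ IsLUB (Set.range u) a := by
  rw [← Nat.range_of_succ u, h₀, Set.singleton_union]
  simp [IsLUB, upperBounds_insert, Function.comp_def]

namespace Coplay

open Set

variable {E : Type u} {ar : E → Type v} {X : Type w}

-- `ret` and `op` have length one, so that `trunc 0` is empty and truncating a node at `k + 1`
-- truncates its subtrees at `k`.
def length : Coplay E ar X → ℕ
  | ret _ => 1
  | op _ => 1
  | cons _ _ s => s.length + 1

theorem Prefix.length_le {s t : Coplay E ar X} (h : s.Prefix t) : s.length ≤ t.length := by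
  induction h with
  | cons _ _ _ ih => exact Nat.succ_le_succ ih
  | _ => simp [length]

def node (m : E) (f : ar m → Set (Coplay E ar X)) : Set (Coplay E ar X) :=
  {op m} ∪ {s | ∃ (n : ar m) (u : Coplay E ar X), u ∈ f n ∧ s = cons m n u}

theorem op_mem_node {m : E} {f : ar m → Set (Coplay E ar X)} : op m ∈ node m f :=
  Or.inl rfl

theorem preimage_cons_node {m : E} (f : ar m → Set (Coplay E ar X)) (n : ar m) :
    cons m n ⁻¹' node m f = f n := by
  ext u
  simp [node]

theorem Coh.of_cons {m : E} {n : ar m} {s t : Coplay E ar X}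
    (h : Coh (Coplay.cons m n s) (Coplay.cons m n t)) : Coh s t := by
  cases h with
  | cons _ _ _ _ _ h => exact h rfl

end Coplay

namespace IsCostrategy

open Set Coplay

variable {E : Type u} {ar : E → Type v} {X : Type w} {σ : Set (Coplay E ar X)}

theorem preimage_cons (hσ : IsCostrategy σ) (m : E) (n : ar m) :
    IsCostrategy (cons m n ⁻¹' σ) :=
  ⟨fun _ _ hst ht => hσ.1 _ _ (.cons m n hst) ht,
    fun _ hs _ ht => (hσ.2 _ hs _ ht).imp Coh.of_cons Coh.of_cons⟩

theorem op_mem_of_cons_mem (hσ : IsCostrategy σ) {m : E} {n : ar m} {s : Coplay E ar X}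
    (h : cons m n s ∈ σ) : op m ∈ σ :=
  hσ.1 _ _ (.op_cons m n s) h

theorem eq_singleton_of_ret_mem (hσ : IsCostrategy σ) {x : X} (hx : ret x ∈ σ) :
    σ = {ret x} := by
  refine eq_singleton_iff_unique_mem.mpr ⟨hx, fun t ht => ?_⟩
  rcases hσ.2 _ hx _ ht with h | h <;> cases h <;> rfl

theorem eq_op_or_eq_cons_of_op_mem (hσ : IsCostrategy σ) {m : E} (hm : op m ∈ σ)
    {t : Coplay E ar X} (ht : t ∈ σ) :
    t = op m ∨ ∃ (n : ar m) (u : Coplay E ar X), t = cons m n u := by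
  rcases hσ.2 _ hm _ ht with h | h
  · cases h with
    | op => exact .inl rfl
    | op_cons _ n u => exact .inr ⟨n, u, rfl⟩
  · cases h; exact .inl rfl

theorem eq_of_op_mem_of_op_mem (hσ : IsCostrategy σ) {m m' : E} (hm : op m ∈ σ)
    (hm' : op m' ∈ σ) : m = m' := by
  rcases hσ.2 _ hm _ hm' with h | h <;> cases h <;> rfl

theorem ret_notMem_of_op_mem (hσ : IsCostrategy σ) {m : E} (hm : op m ∈ σ) (x : X) :
    ret x ∉ σ := fun hx => by
  rcases hσ.2 _ hm _ hx with h | h <;> cases h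

theorem eq_empty_or_eq_ret_or_op_mem (hσ : IsCostrategy σ) :
    σ = ∅ ∨ (∃ x, σ = {ret x}) ∨ ∃ m, op m ∈ σ := by
  rcases σ.eq_empty_or_nonempty with h | ⟨t, ht⟩
  · exact .inl h
  cases t with
  | ret x => exact .inr (.inl ⟨x, hσ.eq_singleton_of_ret_mem ht⟩)
  | op m => exact .inr (.inr ⟨m, ht⟩)
  | cons m n s => exact .inr (.inr ⟨m, hσ.op_mem_of_cons_mem ht⟩)

end IsCostrategy

abbrev Costrategy (E : Type u) (ar : E → Type v) (X : Type w) :=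
  {σ : Set (Coplay E ar X) // IsCostrategy σ}

namespace Costrategy

open Set Coplay

variable {E : Type u} {ar : E → Type v} {X : Type w}

def branch (σ : Costrategy E ar X) (m : E) (n : ar m) : Costrategy E ar X :=
  ⟨cons m n ⁻¹' σ.1, σ.2.preimage_cons m n⟩

theorem branch_mono {σ τ : Costrategy E ar X} (h : σ ≤ τ) (m : E) (n : ar m) :
    σ.branch m n ≤ τ.branch m n :=
  preimage_mono h

theorem branch_eq_of_eq_node {σ : Costrategy E ar X} {m : E} {f : ar m → Costrategy E ar X}
    (h : σ.1 = node m fun n => (f n).1) (n : ar m) : σ.branch m n = f n :=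
  Subtype.ext (by simp only [branch, h, preimage_cons_node])

theorem val_branch_eq_biUnion {τ : Costrategy E ar X} {D : Set (Costrategy E ar X)}
    (hτ : τ.1 = ⋃ σ ∈ D, σ.1) (m : E) (n : ar m) :
    (τ.branch m n).1 = ⋃ σ ∈ (branch · m n) '' D, σ.1 := by
  rw [biUnion_image]
  simp only [branch, hτ, preimage_iUnion₂]

def trunc (σ : Costrategy E ar X) (k : ℕ) : Costrategy E ar X :=
  ⟨{s ∈ σ.1 | s.length ≤ k}, fun _ _ hst ⟨ht, hk⟩ => ⟨σ.2.1 _ _ hst ht, hst.length_le.trans hk⟩,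
    fun _ hs _ ht => σ.2.2 _ hs.1 _ ht.1⟩

theorem monotone_trunc (σ : Costrategy E ar X) : Monotone σ.trunc :=
  fun _ _ hjk _ hs => ⟨hs.1, hs.2.trans hjk⟩

theorem iUnion_trunc (σ : Costrategy E ar X) : σ.1 = ⋃ k, (σ.trunc k).1 := by
  ext s
  simpa [trunc] using fun _ => ⟨s.length, le_rfl⟩

theorem val_trunc_zero (σ : Costrategy E ar X) : (σ.trunc 0).1 = ∅ := by
  ext s
  cases s <;> simp [trunc, length]

theorem val_trunc_succ_of_eq_ret {σ : Costrategy E ar X} {x : X} (h : σ.1 = {ret x}) (k : ℕ) :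
    (σ.trunc (k + 1)).1 = {ret x} := by
  ext s
  simp only [trunc, h, mem_ofPred_eq, mem_singleton_iff]
  exact ⟨And.left, fun hs => ⟨hs, by simp [hs, length]⟩⟩

theorem val_trunc_succ_of_op_mem {σ : Costrategy E ar X} {m : E} (hm : op m ∈ σ.1) (k : ℕ) :
    (σ.trunc (k + 1)).1 = node m fun n => ((σ.branch m n).trunc k).1 := by
  ext s
  refine ⟨fun ⟨hs, hk⟩ => ?_, ?_⟩
  · rcases σ.2.eq_op_or_eq_cons_of_op_mem hm hs with rfl | ⟨n, u, rfl⟩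
    · exact op_mem_node
    · exact .inr ⟨n, u, ⟨hs, Nat.le_of_succ_le_succ hk⟩, rfl⟩
  · rintro (rfl | ⟨n, u, ⟨hu, hk⟩, rfl⟩)
    exacts [⟨hm, Nat.le_add_left 1 k⟩, ⟨hu, Nat.succ_le_succ hk⟩]

section

variable {A : Type*} [PartialOrder A] [OrderBot A] {ρ : X → A} {α : (m : E) → (ar m → A) → A}

open Classical in
noncomputable def approx (ρ : X → A) (α : (m : E) → (ar m → A) → A) :
    ℕ → Costrategy E ar X → A
  | 0, _ => ⊥
  | k + 1, σ =>
    if hx : ∃ x, ret x ∈ σ.1 then ρ hx.choose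
    else if hm : ∃ m, op m ∈ σ.1 then α hm.choose fun n => approx ρ α k (σ.branch hm.choose n)
    else ⊥

theorem approx_of_eq_empty {σ : Costrategy E ar X} (h : σ.1 = ∅) (k : ℕ) :
    approx ρ α k σ = ⊥ := by
  cases k with
  | zero => rfl
  | succ k => simp [approx, h]

theorem approx_succ_of_eq_ret {σ : Costrategy E ar X} {x : X} (h : σ.1 = {ret x}) (k : ℕ) :
    approx ρ α (k + 1) σ = ρ x := by
  have hx : ∃ y, ret y ∈ σ.1 := ⟨x, h ▸ mem_singleton _⟩
  have hmem : ret hx.choose ∈ ({ret x} : Set (Coplay E ar X)) := h ▸ hx.choose_spec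
  rw [approx, dif_pos hx, ret.inj hmem]

theorem approx_succ_of_op_mem {σ : Costrategy E ar X} {m : E} (hm : op m ∈ σ.1) (k : ℕ) :
    approx ρ α (k + 1) σ = α m fun n => approx ρ α k (σ.branch m n) := by
  have hm' : ∃ m', op m' ∈ σ.1 := ⟨m, hm⟩
  rw [approx, dif_neg fun ⟨x, hx⟩ => σ.2.ret_notMem_of_op_mem hm x hx, dif_pos hm']
  obtain rfl : hm'.choose = m := σ.2.eq_of_op_mem_of_op_mem hm'.choose_spec hm
  rfl

theorem monotone_approx (hα : ∀ m, Monotone (α m)) (k : ℕ) : Monotone (approx ρ α k) := by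
  induction k with
  | zero => exact fun _ _ _ => le_rfl
  | succ k ih =>
    intro σ τ hστ
    rcases σ.2.eq_empty_or_eq_ret_or_op_mem with h | ⟨x, h⟩ | ⟨m, hm⟩
    · exact (approx_of_eq_empty h _).trans_le bot_le
    · rw [approx_succ_of_eq_ret h,
        approx_succ_of_eq_ret (τ.2.eq_singleton_of_ret_mem (hστ (h ▸ mem_singleton _)))]
    · rw [approx_succ_of_op_mem hm, approx_succ_of_op_mem (hστ hm)]
      exact hα m fun n => ih (branch_mono hστ m n)

theorem approx_le_approx_succ (hα : ∀ m, Monotone (α m)) (k : ℕ) (σ : Costrategy E ar X) :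
    approx ρ α k σ ≤ approx ρ α (k + 1) σ := by
  induction k generalizing σ with
  | zero => exact bot_le
  | succ k ih =>
    rcases σ.2.eq_empty_or_eq_ret_or_op_mem with h | ⟨x, h⟩ | ⟨m, hm⟩
    · rw [approx_of_eq_empty h, approx_of_eq_empty h]
    · rw [approx_succ_of_eq_ret h, approx_succ_of_eq_ret h]
    · rw [approx_succ_of_op_mem hm, approx_succ_of_op_mem hm]
      exact hα m fun n => ih _

theorem monotone_approx_nat (hα : ∀ m, Monotone (α m)) (σ : Costrategy E ar X) :
    Monotone fun k => approx ρ α k σ :=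
  monotone_nat_of_le_succ fun k => approx_le_approx_succ hα k σ

theorem le_of_eq_biUnion {D : Set (Costrategy E ar X)} {τ σ : Costrategy E ar X}
    (hτ : τ.1 = ⋃ σ ∈ D, σ.1) (hσ : σ ∈ D) : σ ≤ τ :=
  fun _ hs => hτ ▸ mem_biUnion hσ hs

theorem approx_le_of_eq_biUnion (hα : ∀ m, ScottContinuous (α m)) (k : ℕ)
    {D : Set (Costrategy E ar X)} (hne : D.Nonempty) (hdir : DirectedOn (· ≤ ·) D)
    {τ : Costrategy E ar X} (hτ : τ.1 = ⋃ σ ∈ D, σ.1) {b : A}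
    (hb : ∀ σ ∈ D, approx ρ α k σ ≤ b) : approx ρ α k τ ≤ b := by
  induction k generalizing D τ b with
  | zero => exact bot_le
  | succ k ih =>
    have hmono m := (hα m).monotone
    rcases τ.2.eq_empty_or_eq_ret_or_op_mem with h | ⟨x, h⟩ | ⟨m, hm⟩
    · exact (approx_of_eq_empty h _).trans_le bot_le
    · obtain ⟨σ, hσD, hx⟩ : ∃ σ ∈ D, ret x ∈ σ.1 := by
        simpa [hτ] using (h ▸ mem_singleton _ : ret x ∈ τ.1)
      rw [approx_succ_of_eq_ret h,
        ← approx_succ_of_eq_ret (ρ := ρ) (α := α) (σ.2.eq_singleton_of_ret_mem hx) k]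
      exact hb σ hσD
    · obtain ⟨σ₀, hσ₀D, hσ₀m⟩ : ∃ σ ∈ D, op m ∈ σ.1 := by simpa [hτ] using hm
      have hbranch : IsLUB ((fun σ n => approx ρ α k (σ.branch m n)) '' D)
          fun n => approx ρ α k (τ.branch m n) := by
        refine ⟨?_, fun u hu n => ih (hne.image _) (hdir.mono_comp fun _ _ h => branch_mono h m n)
          (val_branch_eq_biUnion hτ m n) ?_⟩
        · rintro _ ⟨σ, hσD, rfl⟩ n
          exact monotone_approx hmono k (branch_mono (le_of_eq_biUnion hτ hσD) m n)
        · rintro _ ⟨σ, hσD, rfl⟩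
          exact hu ⟨σ, hσD, rfl⟩ n
      rw [approx_succ_of_op_mem hm]
      refine ((hα m) (hne.image _) (hdir.mono_comp fun _ _ h n =>
        monotone_approx hmono k (branch_mono h m n)) hbranch).2 ?_
      rintro _ ⟨_, ⟨σ, hσD, rfl⟩, rfl⟩
      -- `σ` may lack the root `op m`; compare it with a member of `D` above both `σ` and `σ₀`
      obtain ⟨σ', hσ'D, hσσ', hσ₀σ'⟩ := hdir σ hσD σ₀ hσ₀D
      calc α m (fun n => approx ρ α k (σ.branch m n))
          ≤ α m (fun n => approx ρ α k (σ'.branch m n)) :=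
            hmono m fun n => monotone_approx hmono k (branch_mono hσσ' m n)
        _ = approx ρ α (k + 1) σ' := (approx_succ_of_op_mem (hσ₀σ' hσ₀m) k).symm
        _ ≤ b := hb σ' hσ'D

theorem apply_trunc_eq_approx {h : Costrategy E ar X → A}
    (h_empty : ∀ σ : Costrategy E ar X, σ.1 = ∅ → h σ = ⊥)
    (h_ret : ∀ (x : X) (σ : Costrategy E ar X), σ.1 = {ret x} → h σ = ρ x)
    (h_node : ∀ (m : E) (f : ar m → Costrategy E ar X) (σ : Costrategy E ar X),
      σ.1 = node m (fun n => (f n).1) → h σ = α m fun n => h (f n))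
    (k : ℕ) (σ : Costrategy E ar X) : h (σ.trunc k) = approx ρ α k σ := by
  induction k generalizing σ with
  | zero => exact h_empty _ σ.val_trunc_zero
  | succ k ih =>
    rcases σ.2.eq_empty_or_eq_ret_or_op_mem with he | ⟨x, hx⟩ | ⟨m, hm⟩
    · rw [h_empty _ (subset_empty_iff.mp (he ▸ sep_subset _ _)), approx_of_eq_empty he]
    · rw [h_ret x _ (val_trunc_succ_of_eq_ret hx k), approx_succ_of_eq_ret hx]
    · rw [h_node m _ _ (val_trunc_succ_of_op_mem hm k), approx_succ_of_op_mem hm]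
      simp only [ih]

open Classical in
noncomputable def fold (ρ : X → A) (α : (m : E) → (ar m → A) → A) (σ : Costrategy E ar X) : A :=
  if h : ∃ l, IsLUB (range fun k => approx ρ α k σ) l then h.choose else ⊥

theorem isLUB_fold (hA : ∀ u : ℕ → A, Monotone u → ∃ l, IsLUB (range u) l)
    (hα : ∀ m, Monotone (α m)) (σ : Costrategy E ar X) :
    IsLUB (range fun k => approx ρ α k σ) (fold ρ α σ) := by
  have h := hA _ (monotone_approx_nat (ρ := ρ) hα σ)
  rw [fold, dif_pos h]
  exact h.choose_spec

theorem approx_le_fold (hA : ∀ u : ℕ → A, Monotone u → ∃ l, IsLUB (range u) l)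
    (hα : ∀ m, Monotone (α m)) (k : ℕ) (σ : Costrategy E ar X) :
    approx ρ α k σ ≤ fold ρ α σ :=
  (isLUB_fold hA hα σ).1 (mem_range_self k)

theorem fold_le (hA : ∀ u : ℕ → A, Monotone u → ∃ l, IsLUB (range u) l)
    (hα : ∀ m, Monotone (α m)) {σ : Costrategy E ar X} {b : A}
    (h : ∀ k, approx ρ α k σ ≤ b) : fold ρ α σ ≤ b :=
  (isLUB_fold hA hα σ).2 (forall_mem_range.2 h)

theorem monotone_fold (hA : ∀ u : ℕ → A, Monotone u → ∃ l, IsLUB (range u) l)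
    (hα : ∀ m, Monotone (α m)) : Monotone (fold (E := E) (ar := ar) ρ α) := fun _ τ h =>
  fold_le hA hα fun k => (monotone_approx hα k h).trans (approx_le_fold hA hα k τ)

theorem fold_of_eq_empty (hA : ∀ u : ℕ → A, Monotone u → ∃ l, IsLUB (range u) l)
    (hα : ∀ m, Monotone (α m)) {σ : Costrategy E ar X} (h : σ.1 = ∅) : fold ρ α σ = ⊥ :=
  le_bot_iff.mp (fold_le hA hα fun k => (approx_of_eq_empty h k).le)

theorem fold_of_eq_ret (hA : ∀ u : ℕ → A, Monotone u → ∃ l, IsLUB (range u) l)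
    (hα : ∀ m, Monotone (α m)) {σ : Costrategy E ar X} {x : X} (h : σ.1 = {ret x}) :
    fold ρ α σ = ρ x := by
  refine (isLUB_fold hA hα σ).unique ((isLUB_range_succ_iff rfl).mp ?_)
  simp only [approx_succ_of_eq_ret h, range_const]
  exact isLUB_singleton

theorem fold_of_eq_node (hA : ∀ u : ℕ → A, Monotone u → ∃ l, IsLUB (range u) l)
    (hα : ∀ m, ScottContinuous (α m)) {m : E} {f : ar m → Costrategy E ar X}
    {σ : Costrategy E ar X} (h : σ.1 = node m fun n => (f n).1) :
    fold ρ α σ = α m fun n => fold ρ α (f n) := by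
  have hmono m := (hα m).monotone
  have hbranches : IsLUB (range fun k n => approx ρ α k (f n)) fun n => fold ρ α (f n) :=
    isLUB_pi.2 fun n => by
      rw [← range_comp]
      exact isLUB_fold hA hmono (f n)
  have hchain : Monotone fun k n => approx ρ α k (f n) :=
    fun _ _ hjk n => monotone_approx_nat hmono (f n) hjk
  have := (hα m) (range_nonempty _) hchain.directed_le.directedOn_range hbranches
  rw [← range_comp'] at this
  refine (isLUB_fold hA hmono σ).unique ((isLUB_range_succ_iff rfl).mp ?_)
  simpa only [approx_succ_of_op_mem (h ▸ op_mem_node), branch_eq_of_eq_node h] using this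

theorem isLUB_fold_image (hA : ∀ u : ℕ → A, Monotone u → ∃ l, IsLUB (range u) l)
    (hα : ∀ m, ScottContinuous (α m)) {D : Set (Costrategy E ar X)} (hne : D.Nonempty)
    (hdir : DirectedOn (· ≤ ·) D) {τ : Costrategy E ar X} (hτ : τ.1 = ⋃ σ ∈ D, σ.1) :
    IsLUB (fold ρ α '' D) (fold ρ α τ) := by
  have hmono m := (hα m).monotone
  refine ⟨?_, fun b hb => fold_le hA hmono fun k => approx_le_of_eq_biUnion hα k hne hdir hτ
    fun σ hσ => (approx_le_fold hA hmono k σ).trans (hb ⟨σ, hσ, rfl⟩)⟩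
  rintro _ ⟨σ, hσ, rfl⟩
  exact monotone_fold hA hmono (le_of_eq_biUnion hτ hσ)

theorem eq_fold (hA : ∀ u : ℕ → A, Monotone u → ∃ l, IsLUB (range u) l)
    (hα : ∀ m, Monotone (α m)) {h : Costrategy E ar X → A}
    (h_empty : ∀ σ : Costrategy E ar X, σ.1 = ∅ → h σ = ⊥)
    (h_cont : ∀ D : Set (Costrategy E ar X), D.Nonempty → DirectedOn (· ≤ ·) D →
      ∀ τ : Costrategy E ar X, τ.1 = ⋃ σ ∈ D, σ.1 → IsLUB (h '' D) (h τ))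
    (h_ret : ∀ (x : X) (σ : Costrategy E ar X), σ.1 = {ret x} → h σ = ρ x)
    (h_node : ∀ (m : E) (f : ar m → Costrategy E ar X) (σ : Costrategy E ar X),
      σ.1 = node m (fun n => (f n).1) → h σ = α m fun n => h (f n)) :
    h = fold ρ α := by
  funext σ
  have hσ := h_cont _ (range_nonempty σ.trunc) σ.monotone_trunc.directed_le.directedOn_range σ
    (by rw [biUnion_range]; exact σ.iUnion_trunc)
  have htrunc : h ∘ σ.trunc = fun k => approx ρ α k σ :=
    funext (apply_trunc_eq_approx h_empty h_ret h_node · σ)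
  rw [← range_comp, htrunc] at hσ
  exact hσ.unique (isLUB_fold hA hα σ)

end

end Costrategy

theorem costrategies_initial_algebra_general (E : Type u) (ar : E → Type v) (X : Type w)
    (A : Type*) [PartialOrder A] [OrderBot A]
    (hA : ∀ S : Set A, S.Nonempty → DirectedOn (· ≤ ·) S → ∃ l : A, IsLUB S l)
    (ρ : X → A) (α : (m : E) → (ar m → A) → A)
    (hcont : ∀ (m : E) (S : Set (ar m → A)), S.Nonempty → DirectedOn (· ≤ ·) S →
      ∀ g : ar m → A, IsLUB S g → IsLUB (α m '' S) (α m g)) :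
    ∃! h : {σ : Set (Coplay E ar X) // IsCostrategy σ} → A,
      (∀ σ : {σ : Set (Coplay E ar X) // IsCostrategy σ}, σ.1 = ∅ → h σ = ⊥) ∧
      (∀ σ τ : {σ : Set (Coplay E ar X) // IsCostrategy σ}, σ.1 ⊆ τ.1 → h σ ≤ h τ) ∧
      (∀ D : Set {σ : Set (Coplay E ar X) // IsCostrategy σ}, D.Nonempty →
        (∀ σ₁ ∈ D, ∀ σ₂ ∈ D, ∃ σ ∈ D, σ₁.1 ⊆ σ.1 ∧ σ₂.1 ⊆ σ.1) →
        ∀ τ : {σ : Set (Coplay E ar X) // IsCostrategy σ}, τ.1 = ⋃ σ ∈ D, σ.1 →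
          IsLUB (h '' D) (h τ)) ∧
      (∀ (x : X) (σ : {σ : Set (Coplay E ar X) // IsCostrategy σ}),
        σ.1 = {Coplay.ret x} → h σ = ρ x) ∧
      (∀ (m : E) (f : ar m → {σ : Set (Coplay E ar X) // IsCostrategy σ})
          (σ : {σ : Set (Coplay E ar X) // IsCostrategy σ}),
        σ.1 = {Coplay.op m} ∪
          {s | ∃ (n : ar m) (u : Coplay E ar X), u ∈ (f n).1 ∧ s = Coplay.cons m n u} →
        h σ = α m (fun n => h (f n))) := by
  have hα : ∀ m, ScottContinuous (α m) := hcont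
  have hmono m := (hα m).monotone
  have hchain (u : ℕ → A) (hu : Monotone u) : ∃ l, IsLUB (Set.range u) l :=
    hA _ (Set.range_nonempty u) hu.directed_le.directedOn_range
  refine ⟨Costrategy.fold ρ α, ⟨fun _ => Costrategy.fold_of_eq_empty hchain hmono,
    fun _ _ => (Costrategy.monotone_fold hchain hmono ·),
    fun _ hne hdir _ => Costrategy.isLUB_fold_image hchain hα hne hdir,
    fun _ _ => Costrategy.fold_of_eq_ret hchain hmono,
    fun _ _ _ => Costrategy.fold_of_eq_node hchain hα⟩, ?_⟩
  rintro h ⟨h_empty, -, h_cont, h_ret, h_node⟩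
  exact Costrategy.eq_fold hchain hmono h_empty h_cont h_ret h_node

/-- Theorem 3.2, algebra part: initiality of `S̄_E(X)`. -/
theorem costrategies_initial_algebra (E : Type u) (ar : E → Type v) (X : Type w)
    (A : Type*) [PartialOrder A] [OrderBot A]
    (hA : ∀ S : Set A, S.Nonempty → DirectedOn (· ≤ ·) S → ∃ l : A, IsLUB S l)
    (ρ : X → A) (α : (m : E) → (ar m → A) → A)
    (hmono : ∀ m : E, Monotone (α m))
    (hcont : ∀ (m : E) (S : Set (ar m → A)), S.Nonempty → DirectedOn (· ≤ ·) S →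
      ∀ g : ar m → A, IsLUB S g → IsLUB (α m '' S) (α m g)) :
    ∃! h : {σ : Set (Coplay E ar X) // IsCostrategy σ} → A,
      (∀ σ : {σ : Set (Coplay E ar X) // IsCostrategy σ}, σ.1 = ∅ → h σ = ⊥) ∧
      (∀ σ τ : {σ : Set (Coplay E ar X) // IsCostrategy σ}, σ.1 ⊆ τ.1 → h σ ≤ h τ) ∧
      (∀ D : Set {σ : Set (Coplay E ar X) // IsCostrategy σ}, D.Nonempty →
        (∀ σ₁ ∈ D, ∀ σ₂ ∈ D, ∃ σ ∈ D, σ₁.1 ⊆ σ.1 ∧ σ₂.1 ⊆ σ.1) →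
        ∀ τ : {σ : Set (Coplay E ar X) // IsCostrategy σ}, τ.1 = ⋃ σ ∈ D, σ.1 →
          IsLUB (h '' D) (h τ)) ∧
      (∀ (x : X) (σ : {σ : Set (Coplay E ar X) // IsCostrategy σ}),
        σ.1 = {Coplay.ret x} → h σ = ρ x) ∧
      (∀ (m : E) (f : ar m → {σ : Set (Coplay E ar X) // IsCostrategy σ})
          (σ : {σ : Set (Coplay E ar X) // IsCostrategy σ}),
        σ.1 = {Coplay.op m} ∪
          {s | ∃ (n : ar m) (u : Coplay E ar X), u ∈ (f n).1 ∧ s = Coplay.cons m n u} →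
        h σ = α m (fun n => h (f n))) :=
  costrategies_initial_algebra_general E ar X A hA ρ α hcont
end

section
/- Terminality (Theorem 3.2, coalgebra part): let E be an effect signature, X a type, A a partial order with least element ⊥ in which every directed subset has a least upper bound, and let δ : A → Option ((Σ m : E, (ar m → A)) ⊕ X) satisfy δ ⊥ = none and be Scott-continuous with respect to the order on the codomain (none ≤ d for all d; some (inl ⟨m, g⟩) ≤ some (inl ⟨m', g'⟩) iff m = m' and g n ≤ g' n for all n; some (inr x) ≤ some (inr x') iff x = x'), i.e. monotone and preserving least upper bounds of directed subsets. Then there exists a unique function ψ : A → S̄_E(X) such that: ψ ⊥ = ∅; ψ is monotone and preserves least upper bounds of directed subsets; and for every a : A, if δ a = none then ψ a = ∅, if δ a = some (inr x) then ψ a = {ret x}, and if δ a = some (inl ⟨m, g⟩) then ψ a = {op m} ∪ {m·n·s | n : ar m, s ∈ ψ (g n)}. -/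
universe u v w

/-- The codomain `Option ((Σ m : E, (ar m → A)) ⊕ X)` of a coalgebra structure map. -/
def CoalgObj (E : Type u) (ar : E → Type v) (X : Type w) (A : Type u_1) :=
  Option ((Σ m : E, (ar m → A)) ⊕ X)

/-- The order on `Option ((Σ m : E, (ar m → A)) ⊕ X)`. -/
inductive CoalgLE {E : Type u} {ar : E → Type v} {X : Type w} {A : Type u_1} [LE A] :
    CoalgObj E ar X A → CoalgObj E ar X A → Prop
  | bot (d : CoalgObj E ar X A) : CoalgLE none d
  | inl (m : E) (g g' : ar m → A) :
      (∀ n, g n ≤ g' n) → CoalgLE (some (Sum.inl ⟨m, g⟩)) (some (Sum.inl ⟨m, g'⟩))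
  | inr (x : X) : CoalgLE (some (Sum.inr x)) (some (Sum.inr x))

/-!
The unique candidate sends `a` to the set of coplays traced out by unfolding `δ` from `a`:
`ret x` when `δ a = inr x`, and `op m` together with every `m·n·s` with `s` traced from `g n`
when `δ a = inl ⟨m, g⟩`. The three equations determine membership of a coplay by induction on
it, which gives uniqueness. For continuity, let `l` be the least upper bound of a directed `S`
with `δ l = inl ⟨m, g⟩`: then `g n` is the least upper bound of the directed set of the `n`-th
continuations of the elements of `S`, so by induction every coplay traced from `l` is traced
from some element of `S`.
-/

namespace CoalgLE

variable {E : Type u} {ar : E → Type v} {X : Type w} {A : Type*} [LE A]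

theorem eq_none {d : CoalgObj E ar X A} (h : CoalgLE d none) : d = none := by
  cases h; rfl

theorem inr_le {x : X} {d : CoalgObj E ar X A} (h : CoalgLE (some (.inr x)) d) :
    d = some (.inr x) := by
  cases h; rfl

theorem exists_of_inl_le {m : E} {g : ar m → A} {d : CoalgObj E ar X A}
    (h : CoalgLE (some (.inl ⟨m, g⟩)) d) :
    ∃ g', d = some (.inl ⟨m, g'⟩) ∧ ∀ n, g n ≤ g' n := by
  cases h with
  | inl _ _ g' hg => exact ⟨g', rfl, hg⟩

theorem inl_le_inl {m : E} {g g' : ar m → A}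
    (h : CoalgLE (some (.inl ⟨m, g⟩) : CoalgObj E ar X A) (some (.inl ⟨m, g'⟩))) :
    ∀ n, g n ≤ g' n := by
  cases h; assumption

theorem eq_of_le_inr {x : X} {d : CoalgObj E ar X A} (h : CoalgLE d (some (.inr x)))
    (hd : d ≠ none) : d = some (.inr x) := by
  cases h with
  | bot => exact absurd rfl hd
  | inr => rfl

theorem exists_of_le_inl {m : E} {g : ar m → A} {d : CoalgObj E ar X A}
    (h : CoalgLE d (some (.inl ⟨m, g⟩))) (hd : d ≠ none) :
    ∃ g', d = some (.inl ⟨m, g'⟩) ∧ ∀ n, g' n ≤ g n := by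
  cases h with
  | bot => exact absurd rfl hd
  | inl _ g' _ hg => exact ⟨g', rfl, hg⟩

end CoalgLE

def CoalgMonotone {E : Type u} {ar : E → Type v} {X : Type w} {A : Type*} [LE A]
    (δ : A → CoalgObj E ar X A) : Prop :=
  ∀ a b : A, a ≤ b → CoalgLE (δ a) (δ b)

namespace Coplay

variable {E : Type u} {ar : E → Type v} {X : Type w} {A : Type*} {δ : A → CoalgObj E ar X A}

variable (δ) in
def IsTrace : Coplay E ar X → A → Prop
  | .ret x, a => δ a = some (.inr x)
  | .op m, a => ∃ g, δ a = some (.inl ⟨m, g⟩)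
  | .cons m n u, a => ∃ g, δ a = some (.inl ⟨m, g⟩) ∧ u.IsTrace (g n)

theorem IsTrace.of_prefix {s t : Coplay E ar X} (hst : s.Prefix t) {a : A}
    (ht : t.IsTrace δ a) : s.IsTrace δ a := by
  induction hst generalizing a with
  | ret | op => exact ht
  | op_cons m n t => exact ht.imp fun _ => And.left
  | cons m n _ ih => exact ht.imp fun g hg => ⟨hg.1, ih hg.2⟩

theorem IsTrace.coh {s t : Coplay E ar X} {a : A} (hs : s.IsTrace δ a)
    (ht : t.IsTrace δ a) : s.Coh t ∨ t.Coh s := by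
  induction s generalizing t a with
  | ret x =>
    cases t with
    | ret y => cases hs.symm.trans ht; exact .inl (.ret x)
    | op m => obtain ⟨g, hg⟩ := ht; cases hs.symm.trans hg
    | cons m n u => obtain ⟨g, hg, -⟩ := ht; cases hs.symm.trans hg
  | op m =>
    obtain ⟨g, hg⟩ := hs
    cases t with
    | ret y => cases hg.symm.trans ht
    | op m' => obtain ⟨g', hg'⟩ := ht; cases hg.symm.trans hg'; exact .inl (.op m)
    | cons m' n u =>
      obtain ⟨g', hg', -⟩ := ht; cases hg.symm.trans hg'; exact .inl (.op_cons m n u)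
  | cons m n u ih =>
    obtain ⟨g, hg, hu⟩ := hs
    cases t with
    | ret y => cases hg.symm.trans ht
    | op m' => obtain ⟨g', hg'⟩ := ht; cases hg.symm.trans hg'; exact .inr (.op_cons m n u)
    | cons m' n' u' =>
      obtain ⟨g', hg', hu'⟩ := ht
      cases hg.symm.trans hg'
      by_cases hn : n = n'
      · subst hn
        exact (ih hu hu').imp (fun h => .cons m n n u u' fun _ => h)
          (fun h => .cons m n n u' u fun _ => h)
      · exact .inl (.cons m n n' u u' fun h => absurd h hn)

theorem IsTrace.mono [LE A] (hmono : CoalgMonotone δ)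
    {s : Coplay E ar X} {a b : A} (hab : a ≤ b) (hs : s.IsTrace δ a) : s.IsTrace δ b := by
  induction s generalizing a b with
  | ret x =>
    have hδ := hmono a b hab
    rw [show δ a = _ from hs] at hδ
    exact hδ.inr_le
  | op m =>
    obtain ⟨g, hg⟩ := hs
    have hδ := hmono a b hab
    rw [hg] at hδ
    obtain ⟨g', hg', -⟩ := hδ.exists_of_inl_le
    exact ⟨g', hg'⟩
  | cons m n u ih =>
    obtain ⟨g, hg, hu⟩ := hs
    have hδ := hmono a b hab
    rw [hg] at hδ
    obtain ⟨g', hg', hle⟩ := hδ.exists_of_inl_le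
    exact ⟨g', hg', ih (hle n) hu⟩

end Coplay

namespace CostrategyCoalgebra

variable {E : Type u} {ar : E → Type v} {X : Type w} {A : Type*}

def traces (δ : A → CoalgObj E ar X A) (a : A) : Set (Coplay E ar X) :=
  {s | s.IsTrace δ a}

/-- The right-hand side of the three coalgebra equations. -/
def step (δ : A → CoalgObj E ar X A) (F : A → Set (Coplay E ar X)) (a : A) :
    Set (Coplay E ar X) :=
  match δ a with
  | none => ∅
  | some (.inr x) => {.ret x}
  | some (.inl ⟨m, g⟩) =>
    {.op m} ∪ {s | ∃ (n : ar m) (u : Coplay E ar X), u ∈ F (g n) ∧ s = .cons m n u}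

section Step

variable {δ : A → CoalgObj E ar X A} {F : A → Set (Coplay E ar X)} {a : A}

theorem step_of_none (h : δ a = none) : step δ F a = ∅ := by
  simp only [step, h]

theorem step_of_inr {x : X} (h : δ a = some (.inr x)) : step δ F a = {.ret x} := by
  simp only [step, h]

theorem step_of_inl {m : E} {g : ar m → A} (h : δ a = some (.inl ⟨m, g⟩)) :
    step δ F a =
      {.op m} ∪ {s | ∃ (n : ar m) (u : Coplay E ar X), u ∈ F (g n) ∧ s = .cons m n u} := by
  simp only [step, h]

theorem ret_mem_step {x : X} : Coplay.ret x ∈ step δ F a ↔ δ a = some (.inr x) := by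
  rcases h : δ a with _ | ⟨⟨m', g⟩ | y⟩ <;> simp only [step, h, CoalgObj] <;> aesop

theorem op_mem_step {m : E} :
    Coplay.op m ∈ step δ F a ↔ ∃ g, δ a = some (.inl ⟨m, g⟩) := by
  rcases h : δ a with _ | ⟨⟨m', g⟩ | y⟩ <;> simp only [step, h, CoalgObj] <;> aesop

theorem cons_mem_step {m : E} {n : ar m} {u : Coplay E ar X} :
    Coplay.cons m n u ∈ step δ F a ↔
      ∃ g, δ a = some (.inl ⟨m, g⟩) ∧ u ∈ F (g n) := by
  rcases h : δ a with _ | ⟨⟨m', g⟩ | y⟩ <;> simp only [step, h, CoalgObj] <;> aesop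

end Step

section Traces

variable (δ : A → CoalgObj E ar X A)

theorem traces_eq_step (a : A) : traces δ a = step δ (traces δ) a := by
  ext s
  cases s with
  | ret x => rw [ret_mem_step]; rfl
  | op m => rw [op_mem_step]; rfl
  | cons m n u => rw [cons_mem_step]; rfl

theorem isCostrategy_traces (a : A) : IsCostrategy (traces δ a) :=
  ⟨fun _ _ hst ht => ht.of_prefix hst, fun _ hs _ ht => hs.coh ht⟩

variable {δ}

theorem eq_traces_of_eq_step {F : A → Set (Coplay E ar X)} (hF : ∀ a, F a = step δ F a) :
    F = traces δ := by
  suffices ∀ s a, s ∈ F a ↔ s ∈ traces δ a from funext fun a => Set.ext fun s => this s a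
  intro s
  induction s with
  | ret x => intro a; rw [hF, traces_eq_step, ret_mem_step, ret_mem_step]
  | op m => intro a; rw [hF, traces_eq_step, op_mem_step, op_mem_step]
  | cons m n u ih => intro a; simp only [hF a, traces_eq_step δ a, cons_mem_step, ih]

theorem eq_step_of_cases {F : A → Set (Coplay E ar X)}
    (h_none : ∀ a, δ a = none → F a = ∅)
    (h_inr : ∀ a x, δ a = some (.inr x) → F a = {.ret x})
    (h_inl : ∀ a m (g : ar m → A), δ a = some (.inl ⟨m, g⟩) →
      F a = {.op m} ∪ {s | ∃ (n : ar m) (u : Coplay E ar X), u ∈ F (g n) ∧ s = .cons m n u})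
    (a : A) : F a = step δ F a := by
  rcases h : δ a with _ | ⟨⟨m, g⟩ | x⟩
  · rw [h_none a h, step_of_none h]
  · rw [h_inl a m g h, step_of_inl h]
  · rw [h_inr a x h, step_of_inr h]

end Traces

section Continuity

variable [LE A]

def IsCoalgLUB (δ : A → CoalgObj E ar X A) (S : Set A) (l : A) : Prop :=
  (∀ a ∈ S, CoalgLE (δ a) (δ l)) ∧
    ∀ d : CoalgObj E ar X A, (∀ a ∈ S, CoalgLE (δ a) d) → CoalgLE (δ l) d

def CoalgScottContinuous (δ : A → CoalgObj E ar X A) : Prop :=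
  ∀ S : Set A, S.Nonempty → DirectedOn (· ≤ ·) S → ∀ l, IsLUB S l → IsCoalgLUB δ S l

def continuations (δ : A → CoalgObj E ar X A) (S : Set A) (m : E) (n : ar m) : Set A :=
  {b | ∃ a ∈ S, ∃ g, δ a = some (.inl ⟨m, g⟩) ∧ g n = b}

variable {δ : A → CoalgObj E ar X A} {S : Set A} {l : A}

theorem IsCoalgLUB.exists_ne_none (h : IsCoalgLUB δ S l) (hl : δ l ≠ none) :
    ∃ a ∈ S, δ a ≠ none := by
  by_contra! hS
  exact hl (h.2 none fun a ha => by rw [hS a ha]; exact .bot none).eq_none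

theorem IsCoalgLUB.exists_inr (h : IsCoalgLUB δ S l) {x : X} (hl : δ l = some (.inr x)) :
    ∃ a ∈ S, δ a = some (.inr x) := by
  obtain ⟨a, ha, hne⟩ := h.exists_ne_none (by rw [hl]; nofun)
  exact ⟨a, ha, (hl ▸ h.1 a ha).eq_of_le_inr hne⟩

theorem IsCoalgLUB.exists_inl (h : IsCoalgLUB δ S l) {m : E} {g : ar m → A}
    (hl : δ l = some (.inl ⟨m, g⟩)) : ∃ a ∈ S, ∃ g', δ a = some (.inl ⟨m, g'⟩) := by
  obtain ⟨a, ha, hne⟩ := h.exists_ne_none (by rw [hl]; nofun)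
  obtain ⟨g', hg', -⟩ := (hl ▸ h.1 a ha).exists_of_le_inl hne
  exact ⟨a, ha, g', hg'⟩

theorem IsCoalgLUB.isLUB_continuations (h : IsCoalgLUB δ S l) {m : E} {g : ar m → A}
    (hl : δ l = some (.inl ⟨m, g⟩)) (n : ar m) : IsLUB (continuations δ S m n) (g n) := by
  classical
  refine ⟨?_, fun b hb => ?_⟩
  · rintro _ ⟨a, ha, ga, hga, rfl⟩
    have hle := h.1 a ha
    rw [hga, hl] at hle
    exact hle.inl_le_inl n
  -- test the continuity of `δ` against `inl ⟨m, update g n b⟩`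
  have hle : CoalgLE (δ l) (some (.inl ⟨m, Function.update g n b⟩)) := by
    refine h.2 _ fun a ha => ?_
    rcases eq_or_ne (δ a) none with hna | hna
    · rw [hna]; exact .bot _
    obtain ⟨ga, hga, hle⟩ := (hl ▸ h.1 a ha).exists_of_le_inl hna
    rw [hga]
    refine .inl m ga _ fun k => ?_
    rcases eq_or_ne k n with rfl | hk
    · simpa using hb ⟨a, ha, ga, hga, rfl⟩
    · simpa [hk] using hle k
  rw [hl] at hle
  simpa using hle.inl_le_inl n

theorem directedOn_continuations (hmono : CoalgMonotone δ)
    (hS : DirectedOn (· ≤ ·) S) (m : E) (n : ar m) :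
    DirectedOn (· ≤ ·) (continuations δ S m n) := by
  rintro _ ⟨a₁, ha₁, g₁, hg₁, rfl⟩ _ ⟨a₂, ha₂, g₂, hg₂, rfl⟩
  obtain ⟨c, hc, hac₁, hac₂⟩ := hS a₁ ha₁ a₂ ha₂
  have hδ₁ := hmono a₁ c hac₁
  rw [hg₁] at hδ₁
  obtain ⟨gc, hgc, hle₁⟩ := hδ₁.exists_of_inl_le
  have hδ₂ := hmono a₂ c hac₂
  rw [hg₂, hgc] at hδ₂
  exact ⟨gc n, ⟨c, hc, gc, hgc, rfl⟩, hle₁ n, hδ₂.inl_le_inl n⟩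

theorem exists_isTrace_of_isLUB (hmono : CoalgMonotone δ) (hcont : CoalgScottContinuous δ)
    {s : Coplay E ar X} (hne : S.Nonempty) (hS : DirectedOn (· ≤ ·) S) (hl : IsLUB S l)
    (hs : s.IsTrace δ l) : ∃ a ∈ S, s.IsTrace δ a := by
  induction s generalizing S l with
  | ret x => exact (hcont S hne hS l hl).exists_inr hs
  | op m =>
    obtain ⟨g, hg⟩ := hs
    exact (hcont S hne hS l hl).exists_inl hg
  | cons m n u ih =>
    obtain ⟨g, hg, hu⟩ := hs
    have h := hcont S hne hS l hl
    obtain ⟨a₀, ha₀, g₀, hg₀⟩ := h.exists_inl hg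
    obtain ⟨_, ⟨a, ha, ga, hga, rfl⟩, hua⟩ := ih (S := continuations δ S m n)
      ⟨g₀ n, a₀, ha₀, g₀, hg₀, rfl⟩ (directedOn_continuations hmono hS m n)
      (h.isLUB_continuations hg n) hu
    exact ⟨a, ha, ga, hga, hua⟩

theorem traces_mono (hmono : CoalgMonotone δ) {a b : A} (hab : a ≤ b) :
    traces δ a ⊆ traces δ b :=
  fun _ hs => Coplay.IsTrace.mono hmono hab hs

theorem isLUB_traces (hmono : CoalgMonotone δ) (hcont : CoalgScottContinuous δ)
    (hne : S.Nonempty) (hS : DirectedOn (· ≤ ·) S) (hl : IsLUB S l) :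
    IsLUB (traces δ '' S) (traces δ l) := by
  refine ⟨?_, fun τ hτ s hs => ?_⟩
  · rintro _ ⟨a, ha, rfl⟩
    exact traces_mono hmono (hl.1 ha)
  obtain ⟨a, ha, hsa⟩ := exists_isTrace_of_isLUB hmono hcont hne hS hl hs
  exact hτ ⟨a, ha, rfl⟩ hsa

end Continuity

end CostrategyCoalgebra

open CostrategyCoalgebra in
theorem costrategies_terminal_coalgebra_general (E : Type u) (ar : E → Type v) (X : Type w)
    (A : Type*) [PartialOrder A] [OrderBot A]
    (δ : A → CoalgObj E ar X A)
    (hbot : δ ⊥ = none)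
    (hmono : ∀ a b : A, a ≤ b → CoalgLE (δ a) (δ b))
    (hcont : ∀ S : Set A, S.Nonempty → DirectedOn (· ≤ ·) S → ∀ l : A, IsLUB S l →
      (∀ a ∈ S, CoalgLE (δ a) (δ l)) ∧
      (∀ d : CoalgObj E ar X A, (∀ a ∈ S, CoalgLE (δ a) d) → CoalgLE (δ l) d)) :
    ∃! ψ : A → {σ : Set (Coplay E ar X) // IsCostrategy σ},
      ((ψ ⊥).1 = ∅) ∧
      (∀ a b : A, a ≤ b → (ψ a).1 ⊆ (ψ b).1) ∧
      (∀ S : Set A, S.Nonempty → DirectedOn (· ≤ ·) S → ∀ l : A, IsLUB S l →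
        IsLUB (ψ '' S) (ψ l)) ∧
      (∀ a : A, δ a = none → (ψ a).1 = ∅) ∧
      (∀ (a : A) (x : X), δ a = some (Sum.inr x) → (ψ a).1 = {Coplay.ret x}) ∧
      (∀ (a : A) (m : E) (g : ar m → A), δ a = some (Sum.inl ⟨m, g⟩) →
        (ψ a).1 = {Coplay.op m} ∪
          {s | ∃ (n : ar m) (u : Coplay E ar X), u ∈ (ψ (g n)).1 ∧ s = Coplay.cons m n u}) := by
  refine ⟨fun a => ⟨traces δ a, isCostrategy_traces δ a⟩,
    ⟨?_, fun a b => traces_mono hmono, fun S hne hS l hl => ?_, fun a h => ?_,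
      fun a x h => ?_, fun a m g h => ?_⟩, ?_⟩
  · exact (traces_eq_step δ ⊥).trans (step_of_none hbot)
  · exact IsLUB.of_image (f := Subtype.val) Iff.rfl
      (by rw [Set.image_image]; exact isLUB_traces hmono hcont hne hS hl)
  · exact (traces_eq_step δ a).trans (step_of_none h)
  · exact (traces_eq_step δ a).trans (step_of_inr h)
  · exact (traces_eq_step δ a).trans (step_of_inl h)
  · rintro ψ ⟨-, -, -, h_none, h_inr, h_inl⟩
    have hψ := eq_traces_of_eq_step (eq_step_of_cases h_none h_inr h_inl)
    exact funext fun a => Subtype.ext (congrFun hψ a)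

/-- Theorem 3.2, coalgebra part: terminality of `S̄_E(X)`. -/
theorem costrategies_terminal_coalgebra (E : Type u) (ar : E → Type v) (X : Type w)
    (A : Type*) [PartialOrder A] [OrderBot A]
    (hA : ∀ S : Set A, S.Nonempty → DirectedOn (· ≤ ·) S → ∃ l : A, IsLUB S l)
    (δ : A → CoalgObj E ar X A)
    (hbot : δ ⊥ = none)
    (hmono : ∀ a b : A, a ≤ b → CoalgLE (δ a) (δ b))
    (hcont : ∀ S : Set A, S.Nonempty → DirectedOn (· ≤ ·) S → ∀ l : A, IsLUB S l →
      (∀ a ∈ S, CoalgLE (δ a) (δ l)) ∧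
      (∀ d : CoalgObj E ar X A, (∀ a ∈ S, CoalgLE (δ a) d) → CoalgLE (δ l) d)) :
    ∃! ψ : A → {σ : Set (Coplay E ar X) // IsCostrategy σ},
      ((ψ ⊥).1 = ∅) ∧
      (∀ a b : A, a ≤ b → (ψ a).1 ⊆ (ψ b).1) ∧
      (∀ S : Set A, S.Nonempty → DirectedOn (· ≤ ·) S → ∀ l : A, IsLUB S l →
        IsLUB (ψ '' S) (ψ l)) ∧
      (∀ a : A, δ a = none → (ψ a).1 = ∅) ∧
      (∀ (a : A) (x : X), δ a = some (Sum.inr x) → (ψ a).1 = {Coplay.ret x}) ∧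
      (∀ (a : A) (m : E) (g : ar m → A), δ a = some (Sum.inl ⟨m, g⟩) →
        (ψ a).1 = {Coplay.op m} ∪
          {s | ∃ (n : ar m) (u : Coplay E ar X), u ∈ (ψ (g n)).1 ∧ s = Coplay.cons m n u}) :=
  costrategies_terminal_coalgebra_general E ar X A δ hbot hmono hcont
end

section
/- For any effect signature E and any type X, the map φ : E*X → S̄_E(X) defined recursively by φ (var x) = {ret x} and φ (node m t) = {op m} ∪ {m·n·s | n : ar m, s ∈ φ (t n)} is well-defined (every value of φ is a costrategy) and injective. -/
universe u v w

inductive Term (E : Type u) (ar : E → Type v) (V : Type w) : Type (max u v w)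
  | var : V → Term E ar V
  | node : (m : E) → (ar m → Term E ar V) → Term E ar V

def phi {E : Type u} {ar : E → Type v} {X : Type w} :
    Term E ar X → Set (Coplay E ar X)
  | .var x => {Coplay.ret x}
  | .node m t =>
      {Coplay.op m} ∪
        {s | ∃ (n : ar m) (u : Coplay E ar X), u ∈ phi (t n) ∧ s = Coplay.cons m n u}

/-!
Both halves go by induction on terms. A node costrategy `{op m} ∪ ⋃ₙ m·n·σₙ` is a costrategy
as soon as every `σₙ` is one, since prefixes and coherence of `m·n·s` reduce to those of `s`.
For injectivity, `φ t` determines the root of `t`: it contains `ret x` exactly when `t = var x`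
and `op m` exactly when `t` is a node labelled `m`; and the coplays of `φ (node m f)` starting
with `m·n` are exactly the `m·n·s` with `s ∈ φ (f n)`, so `φ` also determines each `φ (f n)`.
-/

variable {E : Type u} {ar : E → Type v} {X : Type w}

namespace Coplay

def nodeSet (m : E) (σ : ar m → Set (Coplay E ar X)) : Set (Coplay E ar X) :=
  {op m} ∪ {s | ∃ (n : ar m) (u : Coplay E ar X), u ∈ σ n ∧ s = cons m n u}

theorem op_mem_nodeSet_iff {m m' : E} {σ : ar m → Set (Coplay E ar X)} :
    op m' ∈ nodeSet m σ ↔ m' = m := by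
  simp [nodeSet]

theorem cons_mem_nodeSet_iff {m : E} {n : ar m} {s : Coplay E ar X}
    {σ : ar m → Set (Coplay E ar X)} : cons m n s ∈ nodeSet m σ ↔ s ∈ σ n := by
  constructor
  · rintro (h | ⟨n', s', hs', h⟩)
    · cases h
    · cases h
      exact hs'
  · exact fun hs => Or.inr ⟨n, s, hs, rfl⟩

theorem ret_notMem_nodeSet {m : E} {σ : ar m → Set (Coplay E ar X)} (x : X) :
    ret x ∉ nodeSet m σ := by
  simp [nodeSet]

end Coplay

open Coplay

theorem IsCostrategy.singleton_ret (x : X) : IsCostrategy ({ret x} : Set (Coplay E ar X)) := by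
  refine ⟨?_, ?_⟩
  · rintro s _ hst rfl
    cases hst
    rfl
  · rintro _ rfl _ rfl
    exact Or.inl (.ret x)

theorem IsCostrategy.nodeSet {m : E} {σ : ar m → Set (Coplay E ar X)}
    (hσ : ∀ n, IsCostrategy (σ n)) : IsCostrategy (nodeSet m σ) := by
  refine ⟨?_, ?_⟩
  · rintro s _ hst (rfl | ⟨n, u, hu, rfl⟩)
    · cases hst
      exact Or.inl rfl
    · cases hst with
      | op_cons => exact Or.inl rfl
      | cons _ _ hsu => exact cons_mem_nodeSet_iff.2 ((hσ n).1 _ _ hsu hu)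
  · rintro _ (rfl | ⟨n, s, hs, rfl⟩) _ (rfl | ⟨n', t, ht, rfl⟩)
    · exact Or.inl (.op m)
    · exact Or.inl (.op_cons m n' t)
    · exact Or.inr (.op_cons m n s)
    · by_cases hn : n = n'
      · subst hn
        rcases (hσ n).2 s hs t ht with hst | hts
        · exact Or.inl (.cons m n n s t fun _ => hst)
        · exact Or.inr (.cons m n n t s fun _ => hts)
      · exact Or.inl (.cons m n n' s t fun h => absurd h hn)

theorem phi_node (m : E) (f : ar m → Term E ar X) :
    phi (.node m f) = nodeSet m fun n => phi (f n) :=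
  rfl

theorem isCostrategy_phi (t : Term E ar X) : IsCostrategy (phi t) := by
  induction t with
  | var x => exact IsCostrategy.singleton_ret x
  | node m f ih => rw [phi_node]; exact IsCostrategy.nodeSet ih

theorem ret_mem_phi_iff {x : X} {t : Term E ar X} : ret x ∈ phi t ↔ t = .var x := by
  cases t with
  | var y => simp [phi, eq_comm]
  | node m f => simpa [phi_node] using ret_notMem_nodeSet x

theorem op_mem_phi_iff {m : E} {t : Term E ar X} :
    op m ∈ phi t ↔ ∃ f : ar m → Term E ar X, t = .node m f := by
  cases t with
  | var y => simp [phi]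
  | node m' f =>
    rw [phi_node, op_mem_nodeSet_iff]
    constructor
    · rintro rfl
      exact ⟨f, rfl⟩
    · rintro ⟨_, h⟩
      cases h
      rfl

theorem phi_injective : Function.Injective (phi : Term E ar X → Set (Coplay E ar X)) := by
  intro t
  induction t with
  | var x =>
    intro t' h
    exact (ret_mem_phi_iff.1 (h ▸ ret_mem_phi_iff.2 rfl)).symm
  | node m f ih =>
    intro t' h
    obtain ⟨g, rfl⟩ := op_mem_phi_iff.1 (h ▸ op_mem_phi_iff.2 ⟨f, rfl⟩)
    rw [phi_node, phi_node] at h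
    congr 1
    funext n
    refine ih n (Set.ext fun s => ?_)
    simpa only [cons_mem_nodeSet_iff] using Set.ext_iff.1 h (cons m n s)

/-- `φ` is well-defined (every value is a costrategy) and injective. -/
theorem phi_wellDefined_injective (E : Type u) (ar : E → Type v) (X : Type w) :
    (∀ t : Term E ar X, IsCostrategy (phi t)) ∧
    (∀ t t' : Term E ar X, phi t = phi t' → t = t') :=
  ⟨isCostrategy_phi, fun _ _ h => phi_injective h⟩
end

section
/- Merge lemma: for any effect signature E, any type X, and any terms t₁, t₂, t ∈ E*(X_⊥), if t₁ ⊑ t and t₂ ⊑ t, then the pair {t₁, t₂} has a least upper bound t₁ ⊔ t₂ in the partial order (E*(X_⊥), ⊑). -/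
/-!
Below a common bound, two terms agree in shape wherever neither is `⊥`: a variable `some x` can
only lie below itself, and a node only below a node with the same operation. So the join is
built by recursion on the derivation of `t₁ ⊑ t`: `⊥` is neutral, equal variables join to
themselves, and nodes join child by child.
-/

universe u v w


/-- The partial order `⊑` on partial terms in `E*(X_⊥)`. -/
inductive Term.Le {E : Type u} {ar : E → Type v} {X : Type w} :
    Term E ar (Option X) → Term E ar (Option X) → Prop
  | bot (t : Term E ar (Option X)) : Term.Le (.var none) t
  | var (x : X) : Term.Le (.var (some x)) (.var (some x))
  | node (m : E) {t t' : ar m → Term E ar (Option X)} :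
      (∀ n, Term.Le (t n) (t' n)) → Term.Le (.node m t) (.node m t')

namespace Term

variable {E : Type u} {ar : E → Type v} {X : Type w}

theorem Le.refl (t : Term E ar (Option X)) : Le t t := by
  induction t with
  | var v =>
    cases v with
    | none => exact .bot _
    | some x => exact .var x
  | node m f ih => exact .node m ih

theorem Le.exists_eq_node {m : E} {f : ar m → Term E ar (Option X)} {w : Term E ar (Option X)}
    (h : Le (.node m f) w) : ∃ g, w = .node m g ∧ ∀ n, Le (f n) (g n) := by
  cases h with
  | node _ h => exact ⟨_, rfl, h⟩

def IsJoin (t₁ t₂ u : Term E ar (Option X)) : Prop :=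
  Le t₁ u ∧ Le t₂ u ∧ ∀ w, Le t₁ w → Le t₂ w → Le u w

theorem isJoin_self (t : Term E ar (Option X)) : IsJoin t t t :=
  ⟨.refl t, .refl t, fun _ h _ => h⟩

theorem isJoin_bot_left (t : Term E ar (Option X)) : IsJoin (var none) t t :=
  ⟨.bot t, .refl t, fun _ _ h => h⟩

theorem isJoin_bot_right (t : Term E ar (Option X)) : IsJoin t (var none) t :=
  ⟨.refl t, .bot t, fun _ h _ => h⟩

theorem isJoin_node {m : E} {f g j : ar m → Term E ar (Option X)}
    (h : ∀ n, IsJoin (f n) (g n) (j n)) : IsJoin (node m f) (node m g) (node m j) := by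
  refine ⟨.node m fun n => (h n).1, .node m fun n => (h n).2.1, fun w hf hg => ?_⟩
  obtain ⟨w', rfl, hfw⟩ := hf.exists_eq_node
  obtain ⟨_, hw, hgw⟩ := hg.exists_eq_node
  cases hw
  exact .node m fun n => (h n).2.2 _ (hfw n) (hgw n)

theorem Le.exists_isJoin {t₁ t₂ t : Term E ar (Option X)} (h₁ : Le t₁ t) (h₂ : Le t₂ t) :
    ∃ j, IsJoin t₁ t₂ j := by
  induction h₁ generalizing t₂ with
  | bot t => exact ⟨t₂, isJoin_bot_left t₂⟩
  | var x =>
    cases h₂ with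
    | bot => exact ⟨_, isJoin_bot_right _⟩
    | var => exact ⟨_, isJoin_self _⟩
  | node m _ ih =>
    cases h₂ with
    | bot => exact ⟨_, isJoin_bot_right _⟩
    | node _ h₂ =>
      choose j hj using fun n => ih n (h₂ n)
      exact ⟨.node m j, isJoin_node hj⟩

end Term

/-- merge lemma: two terms below a common bound have a least
upper bound in `(E*(X_⊥), ⊑)`. -/
theorem term_merge (E : Type u) (ar : E → Type v) (X : Type w)
    (t₁ t₂ t : Term E ar (Option X)) (h₁ : Term.Le t₁ t) (h₂ : Term.Le t₂ t) :
    ∃ u : Term E ar (Option X),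
      Term.Le t₁ u ∧ Term.Le t₂ u ∧
      ∀ w : Term E ar (Option X), Term.Le t₁ w → Term.Le t₂ w → Term.Le u w :=
  h₁.exists_isJoin h₂
end

section
/- For any effect signature E and any type X, the map ψ : E*(X_⊥) → sets of coplays, defined recursively by ψ (var ⊥) = ∅, ψ (var (some x)) = {ret x}, and ψ (node m t) = {op m} ∪ {m·n·s | n : ar m, s ∈ ψ (t n)}, takes every term to a costrategy and is an order embedding: for all terms t, t' ∈ E*(X_⊥), t ⊑ t' if and only if ψ(t) ⊆ ψ(t'). -/
universe u v w

/-- The interpretation `ψ : E*(X_⊥) → S̄_E(X)` of partial terms as sets of coplays. -/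
def psi {E : Type u} {ar : E → Type v} {X : Type w} :
    Term E ar (Option X) → Set (Coplay E ar X)
  | .var none => ∅
  | .var (some x) => {Coplay.ret x}
  | .node m t =>
      {Coplay.op m} ∪
        {s | ∃ (n : ar m) (u : Coplay E ar X), u ∈ psi (t n) ∧ s = Coplay.cons m n u}


/-! Each coplay of `ψ t` is a path from the root of `t` to an operation node (`op m`) or to a
defined leaf (`ret x`); distinct branches below one node are coherent because `☡` is vacuous on
`m·n₁·s₁, m·n₂·s₂` with `n₁ ≠ n₂`. Conversely `ψ t` determines the shape of `t`: `op m ∈ ψ t'`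
forces `t'` to be a node labelled `m`, `ret x ∈ ψ t'` forces `t' = var (some x)`, and removing the
leading `m·n` from the coplays of `ψ (node m t)` recovers `ψ (t n)`. -/

namespace Coplay

variable {E : Type u} {ar : E → Type v} {X : Type w}

theorem cons_mem_nodeSet {m : E} {σ : ar m → Set (Coplay E ar X)} {n : ar m}
    {u : Coplay E ar X} : cons m n u ∈ nodeSet m σ ↔ u ∈ σ n := by
  constructor
  · rintro (h | ⟨n', u', hu', h⟩)
    · cases h
    · cases h
      exact hu'
  · exact fun hu => Or.inr ⟨n, u, hu, rfl⟩

theorem ret_not_mem_nodeSet {m : E} {σ : ar m → Set (Coplay E ar X)} {x : X} :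
    ret x ∉ nodeSet m σ := by
  rintro (h | ⟨_, _, _, h⟩) <;> cases h

theorem isCostrategy_empty : IsCostrategy (∅ : Set (Coplay E ar X)) :=
  ⟨fun _ _ _ ht => ht.elim, fun _ hs => hs.elim⟩

theorem isCostrategy_singleton_ret (x : X) : IsCostrategy {(ret x : Coplay E ar X)} := by
  refine ⟨?_, ?_⟩
  · rintro s t hst rfl
    cases hst
    rfl
  · rintro s rfl t rfl
    exact Or.inl (Coh.ret x)

theorem isCostrategy_nodeSet {m : E} {σ : ar m → Set (Coplay E ar X)}
    (hσ : ∀ n, IsCostrategy (σ n)) : IsCostrategy (nodeSet m σ) := by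
  refine ⟨?_, ?_⟩
  · rintro s t hst (rfl | ⟨n, u, hu, rfl⟩)
    · cases hst
      exact Or.inl rfl
    · cases hst with
      | op_cons => exact Or.inl rfl
      | cons _ _ hsu => exact cons_mem_nodeSet.2 ((hσ n).1 _ _ hsu hu)
  · rintro s (rfl | ⟨n₁, u₁, hu₁, rfl⟩) t (rfl | ⟨n₂, u₂, hu₂, rfl⟩)
    · exact Or.inl (Coh.op m)
    · exact Or.inl (Coh.op_cons m n₂ u₂)
    · exact Or.inr (Coh.op_cons m n₁ u₁)
    · by_cases hn : n₁ = n₂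
      · subst hn
        exact ((hσ n₁).2 _ hu₁ _ hu₂).imp (fun h => Coh.cons m n₁ n₁ _ _ fun _ => h)
          (fun h => Coh.cons m n₁ n₁ _ _ fun _ => h)
      · exact Or.inl (Coh.cons m n₁ n₂ _ _ fun h => absurd h hn)

end Coplay

namespace Term

open Coplay

variable {E : Type u} {ar : E → Type v} {X : Type w}

theorem psi_node (m : E) (t : ar m → Term E ar (Option X)) :
    psi (node m t) = nodeSet m fun n => psi (t n) :=
  rfl

theorem isCostrategy_psi (t : Term E ar (Option X)) : IsCostrategy (psi t) := by
  induction t with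
  | var v =>
    cases v with
    | none => exact isCostrategy_empty
    | some x => exact isCostrategy_singleton_ret x
  | node m t ih =>
    rw [psi_node]
    exact isCostrategy_nodeSet ih

theorem ret_mem_psi_iff {t : Term E ar (Option X)} {x : X} :
    ret x ∈ psi t ↔ t = var (some x) := by
  constructor
  · intro h
    match t, h with
    | var (some _), rfl => rfl
    | node _ _, h => exact absurd h ret_not_mem_nodeSet
  · rintro rfl
    rfl

theorem op_mem_psi_iff {t : Term E ar (Option X)} {m : E} :
    op m ∈ psi t ↔ ∃ f, t = node m f := by
  constructor
  · intro h
    match t, h with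
    | var (some _), h => cases h
    | node _ f, h =>
      obtain rfl := op_mem_nodeSet_iff.1 h
      exact ⟨f, rfl⟩
  · rintro ⟨f, rfl⟩
    exact op_mem_nodeSet_iff.2 rfl

theorem psi_mono {t t' : Term E ar (Option X)} (h : t.Le t') : psi t ⊆ psi t' := by
  induction h with
  | bot t => exact Set.empty_subset _
  | var x => exact subset_rfl
  | node m _ ih =>
    rintro s (hs | ⟨n, u, hu, rfl⟩)
    · exact Or.inl hs
    · exact cons_mem_nodeSet.2 (ih n hu)

theorem le_of_psi_subset {t t' : Term E ar (Option X)} (h : psi t ⊆ psi t') : t.Le t' := by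
  induction t generalizing t' with
  | var v =>
    cases v with
    | none => exact Le.bot t'
    | some x =>
      obtain rfl := ret_mem_psi_iff.1 (h rfl)
      exact Le.var x
  | node m f ih =>
    obtain ⟨g, rfl⟩ := op_mem_psi_iff.1 (h (Or.inl rfl))
    exact Le.node m fun n => ih n fun u hu =>
      cons_mem_nodeSet.1 (h (cons_mem_nodeSet.2 hu))

theorem le_iff_psi_subset {t t' : Term E ar (Option X)} : t.Le t' ↔ psi t ⊆ psi t' :=
  ⟨psi_mono, le_of_psi_subset⟩

end Term

/-- `ψ` takes every term to a costrategy and is an order embedding. -/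
theorem psi_orderEmbedding (E : Type u) (ar : E → Type v) (X : Type w) :
    (∀ t : Term E ar (Option X), IsCostrategy (psi t)) ∧
    (∀ t t' : Term E ar (Option X), Term.Le t t' ↔ psi t ⊆ psi t') :=
  ⟨Term.isCostrategy_psi, fun _ _ => Term.le_iff_psi_subset⟩
end

section
/- The construction of Example 2.1 is a monad: with T, η, μ and the functorial action as defined, for every type X and every f : T X, g : T (T X), k : T (T (T X)): (i) μ (η f) = f; (ii) μ (map η f) = f, where map h applies h to the Option component pointwise; and (iii) μ (μ k) = μ (map μ k); i.e., μ ∘ η = id, μ ∘ map η = id, and μ ∘ μ = μ ∘ map μ. -/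
universe u v w

/-- The monad of Example 2.1: `T X = Bool → (List Σ × Option X)`. -/
def T (S : Type u) (X : Type v) : Type (max u v) := Bool → List S × Option X

/-- The unit `η x = fun b => ([], some x)`. -/
def eta {S : Type u} {X : Type v} (x : X) : T S X := fun _ => ([], some x)

/-- The functorial action: `(map h f) b = (s, Option.map h o)` where `f b = (s, o)`. -/
def tmap {S : Type u} {X : Type v} {Y : Type w} (h : X → Y) (f : T S X) : T S Y :=
  fun b => ((f b).1, Option.map h (f b).2)

/-- The multiplication `μ`. -/
def mu {S : Type u} {X : Type v} (f : T S (T S X)) : T S X := fun b =>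
  match (f b).2 with
  | none => ((f b).1, none)
  | some g => ((f b).1 ++ (g b).1, (g b).2)

/-- the construction of Example 2.1 satisfies the monad laws. -/
theorem example_monad_laws (S : Type u) (X : Type v)
    (f : T S X) (g : T S (T S X)) (k : T S (T S (T S X))) :
    mu (eta f) = f ∧
    mu (tmap eta f) = f ∧
    mu (mu k) = mu (tmap mu k) := by
  refine ⟨?_, ?_, ?_⟩
  · funext b; simp [mu, eta]
  · funext b; simp [mu, tmap, eta]
    cases h : (f b).2 <;> simp [h, eta] <;> rw [← h]
  · funext b
    simp only [mu, tmap]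
    cases h : (k b).2 with
    | none => simp [h]
    | some g' =>
      simp only [h, Option.map_some]
      cases h2 : (g' b).2 with
      | none => simp [mu, h2]
      | some g'' => simp [mu, h2, List.append_assoc]
end
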